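/- arXiv:2112.11905 — 3 statements merged into one kernel-verified Lean document; each statement's English description precedes it below -/
import Mathlib

section
/- Let X and Y be metric spaces, C ≥ 0, λ ≥ 1, and let f : X → Y be a map such that lip f(x) ≤ C for every x ∈ X. If X is λ-quasiconvex, then f is (Cλ)-Lipschitz. -/
open Set Metric Filter MeasureTheory
open scoped ENNReal NNReal

noncomputable section

/-- The real Hilbert space `ℓ₂(I)`. -/
abbrev L2 (I : Type*) := lp (fun _ : I => ℝ) 2

/-- The standard unit vector `e_i ∈ ℓ₂(I)`. -/
noncomputable def stdVec {I : Type*} (i : I) : L2 I :=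
  letI := Classical.decEq I; lp.single 2 i 1

/-- The (closed) face of the full complex `Σ(I)` spanned by the vertices `e_i`, `i ∈ s`:
the convex hull of the corresponding standard unit vectors. -/
def faceSet {I : Type*} (s : Finset I) : Set (L2 I) := convexHull ℝ (stdVec '' (s : Set I))

/-- `x` lies in the relative interior of the face spanned by `s`. -/
def memRelInt {I : Type*} (s : Finset I) (x : L2 I) : Prop :=
  x ∈ faceSet s ∧ ∀ i ∈ s, 0 < x i

/-- A subcomplex of the full complex `Σ(I)`, encoded by the collection of the vertex sets of
its faces: a nonempty collection of finite nonempty subsets of `I`, closed under passing to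
nonempty subsets. -/
structure IsSubcomplex {I : Type*} (F : Set (Finset I)) : Prop where
  nonempty : F.Nonempty
  faces_nonempty : ∀ s ∈ F, s.Nonempty
  down_closed : ∀ s ∈ F, ∀ t : Finset I, t.Nonempty → t ⊆ s → t ∈ F

/-- The underlying set `|Σ| ⊆ ℓ₂(I)` of a (sub)complex: the union of its faces. -/
def cpxCarrier {I : Type*} (F : Set (Finset I)) : Set (L2 I) := ⋃ s ∈ F, faceSet s

/-- The open star of the face with vertex set `s` in the complex `F`: the union of the
relative interiors of all faces of `F` containing it. -/
def openStar {I : Type*} (F : Set (Finset I)) (s : Finset I) : Set (L2 I) :=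
  ⋃ t ∈ F, ⋃ (_ : s ⊆ t), {x | memRelInt t x}

/-- The smallest subcomplex of `F` whose underlying set contains `A`
(encoded by its collection of faces). -/
def hullFaces {I : Type*} (F : Set (Finset I)) (A : Set (L2 I)) : Set (Finset I) :=
  ⋂₀ {G : Set (Finset I) | G ⊆ F ∧ IsSubcomplex G ∧ A ⊆ cpxCarrier G}

/-- The pointwise (lower) Lipschitz constant at `x` of the restriction of `f` to `S`:
`liminf_{s → 0+} s⁻¹ · sup { d(f x, f y) : y ∈ S, d(x,y) < s }`, valued in `ℝ≥0∞`. -/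
noncomputable def lipWithin {X Y : Type*} [PseudoMetricSpace X] [PseudoMetricSpace Y]
    (f : X → Y) (S : Set X) (x : X) : ℝ≥0∞ :=
  Filter.liminf
    (fun s : ℝ => (⨆ y ∈ S ∩ Metric.ball x s, edist (f x) (f y)) / ENNReal.ofReal s)
    (nhdsWithin 0 (Set.Ioi 0))

/-- The pointwise (lower) Lipschitz constant `lip f (x)`, valued in `ℝ≥0∞`. -/
noncomputable def plip {X Y : Type*} [PseudoMetricSpace X] [PseudoMetricSpace Y]
    (f : X → Y) (x : X) : ℝ≥0∞ := lipWithin f Set.univ x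

/-- A subset `S` of a metric space is `c`-quasiconvex: any two of its points are joined by a
continuous curve in `S` of length (total variation) at most `c` times their distance. -/
def QuasiconvexSet {X : Type*} [PseudoMetricSpace X] (S : Set X) (c : ℝ) : Prop :=
  ∀ x ∈ S, ∀ y ∈ S, ∃ γ : ℝ → X, ContinuousOn γ (Set.Icc 0 1) ∧
    Set.MapsTo γ (Set.Icc 0 1) S ∧ γ 0 = x ∧ γ 1 = y ∧
    eVariationOn γ (Set.Icc 0 1) ≤ ENNReal.ofReal (c * dist x y)

/-- The intrinsic (length) metric of `S`: the infimal length of continuous curves in `S`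
joining `x` and `y`, valued in `ℝ≥0∞` (with `inf ∅ = ∞`). -/
noncomputable def intrinsicDist {X : Type*} [PseudoMetricSpace X] (S : Set X) (x y : X) : ℝ≥0∞ :=
  ⨅ (γ : ℝ → X) (_ : ContinuousOn γ (Set.Icc 0 1) ∧ Set.MapsTo γ (Set.Icc 0 1) S ∧
      γ 0 = x ∧ γ 1 = y),
    eVariationOn γ (Set.Icc 0 1)

/-- `X` has Nagata dimension `≤ n` with constant `c`: for every `s > 0` there is a covering of
`X` by sets of diameter `≤ c·s` such that every set of diameter `≤ s` meets at most `n + 1`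
members of the covering. -/
def NagataDimLE (X : Type*) [PseudoMetricSpace X] (n : ℕ) (c : ℝ) : Prop :=
  ∀ s : ℝ, 0 < s → ∃ B : Set (Set X),
    (∀ x : X, ∃ b ∈ B, x ∈ b) ∧
    (∀ b ∈ B, EMetric.diam b ≤ ENNReal.ofReal (c * s)) ∧
    (∀ A : Set X, EMetric.diam A ≤ ENNReal.ofReal s →
      {b | b ∈ B ∧ (b ∩ A).Nonempty}.encard ≤ (n : ℕ∞) + 1)

/-- `Y` is Lipschitz `k`-connected with constant `lam`: for `0 ≤ m ≤ k`, every `L`-Lipschitz map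
from the unit sphere `S^m ⊆ ℝ^{m+1}` to `Y` extends to a `lam·L`-Lipschitz map on the closed
unit ball `B^{m+1}`. -/
def LipschitzConnectedWith (Y : Type*) [PseudoMetricSpace Y] (k : ℕ) (lam : ℝ) : Prop :=
  ∀ m : ℕ, m ≤ k → ∀ L : ℝ, 0 < L →
    ∀ f : EuclideanSpace ℝ (Fin (m + 1)) → Y,
      LipschitzOnWith (Real.toNNReal L) f (Metric.sphere 0 1) →
      ∃ g : EuclideanSpace ℝ (Fin (m + 1)) → Y,
        LipschitzOnWith (Real.toNNReal (lam * L)) g (Metric.closedBall 0 1) ∧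
        Set.EqOn f g (Metric.sphere 0 1)

end

/-! Fix `K > C`. At every point `x` there are arbitrarily small radii `s` such that `f` maps the
`s`-ball around `x` into the `K s`-ball around `f x`; in particular `f` is continuous. Along a
curve `γ`, continuous induction on `t` gives `d(f (γ 0), f (γ t)) ≤ K · ℓ(γ|[0,t])`: from time `t`
the curve either ends at `γ t` or, by the intermediate value theorem, reaches the sphere around
`γ t` of radius slightly below a good radius, where the increment of `f` is at most `K` times the
distance travelled. Letting `K ↓ C` and applying this to the curves given by quasiconvexity yields
the Lipschitz bound. -/

open Topology

section RealInduction

variable {α β : Type*} [ConditionallyCompleteLinearOrder α] [TopologicalSpace α] [OrderTopology α]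
  [LinearOrder β] [TopologicalSpace β] [OrderClosedTopology β]

theorem le_of_forall_exists_gt_le {ψ R : α → β} {a b : α} (hab : a ≤ b)
    (hψ : ContinuousOn ψ (Icc a b)) (hR : MonotoneOn R (Icc a b)) (ha : ψ a ≤ R a)
    (hstep : ∀ t ∈ Ico a b, ψ t ≤ R t → ∃ t' ∈ Ioc t b, ψ t' ≤ R t') : ψ b ≤ R b := by
  set A := {t ∈ Icc a b | ψ t ≤ R t}
  have hA : A.Nonempty := ⟨a, ⟨le_rfl, hab⟩, ha⟩
  have hAbdd : BddAbove A := ⟨b, fun t ht => ht.1.2⟩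
  have hT : sSup A ∈ Icc a b :=
    ⟨le_csSup hAbdd ⟨⟨le_rfl, hab⟩, ha⟩, csSup_le hA fun t ht => ht.1.2⟩
  have hTA : ψ (sSup A) ≤ R (sSup A) :=
    (hψ _ hT).mono (fun t ht => ht.1) |>.closure_le (g := fun _ => R (sSup A))
      (csSup_mem_closure hA hAbdd) continuousWithinAt_const
      fun t ht => ht.2.trans (hR ht.1 hT (le_csSup hAbdd ht))
  obtain hTb | hTb := hT.2.eq_or_lt
  · rwa [← hTb]
  obtain ⟨t', ht', hψt'⟩ := hstep _ ⟨hT.1, hTb⟩ hTA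
  exact absurd (le_csSup hAbdd ⟨⟨hT.1.trans ht'.1.le, ht'.2⟩, hψt'⟩) ht'.1.not_ge

end RealInduction

section PointwiseLipschitz

variable {X Y : Type*} [PseudoMetricSpace X] [PseudoMetricSpace Y] {f : X → Y}

theorem exists_radius_dist_le_of_plip_lt {x : X} {a : ℝ} (h : plip f x < ENNReal.ofReal a)
    {δ : ℝ} (hδ : 0 < δ) : ∃ s ∈ Ioo 0 δ, ∀ y ∈ ball x s, dist (f x) (f y) ≤ a * s := by
  have ha : 0 < a := ENNReal.ofReal_pos.1 (pos_of_gt h)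
  obtain ⟨s, hs, hsδ⟩ := ((frequently_lt_of_liminf_lt (h := h)).and_eventually
    (Ioo_mem_nhdsGT hδ)).exists
  refine ⟨s, hsδ, fun y hy => ?_⟩
  have hsup := (ENNReal.div_lt_iff (Or.inl (ENNReal.ofReal_pos.2 hsδ.1).ne')
    (Or.inl ENNReal.ofReal_ne_top)).1 hs
  rw [← ENNReal.ofReal_mul ha.le] at hsup
  have hy' : edist (f x) (f y) ≤ ENNReal.ofReal (a * s) :=
    (le_iSup₂ (f := fun y (_ : y ∈ univ ∩ ball x s) => edist (f x) (f y)) y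
      ⟨trivial, hy⟩).trans hsup.le
  rwa [edist_dist, ENNReal.ofReal_le_ofReal_iff (mul_pos ha hsδ.1).le] at hy'

theorem continuousAt_of_plip_lt_top {x : X} (h : plip f x < ⊤) : ContinuousAt f x := by
  obtain ⟨a, -, hxa, -⟩ := ENNReal.lt_iff_exists_real_btwn.1 h
  have ha : 0 < a := ENNReal.ofReal_pos.1 (pos_of_gt hxa)
  refine Metric.continuousAt_iff.2 fun ε hε => ?_
  obtain ⟨s, hs, hball⟩ := exists_radius_dist_le_of_plip_lt hxa (div_pos hε ha)
  refine ⟨s, hs.1, fun {y} hy => ?_⟩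
  calc dist (f y) (f x) = dist (f x) (f y) := dist_comm _ _
    _ ≤ a * s := hball y (mem_ball'.2 (by rwa [dist_comm]))
    _ < ε := (lt_div_iff₀' ha).1 hs.2

end PointwiseLipschitz

section CurveEstimate

variable {X Y : Type*} [MetricSpace X] [PseudoMetricSpace Y] {f : X → Y}

theorem exists_edist_le_of_plip_lt {K : ℝ≥0∞} {γ : ℝ → X} {t b : ℝ} (h : plip f (γ t) < K)
    (htb : t < b) (hγ : ContinuousOn γ (Icc t b)) :
    ∃ t' ∈ Ioc t b, edist (f (γ t)) (f (γ t')) ≤ K * edist (γ t) (γ t') := by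
  obtain hb | hb := eq_or_ne (γ b) (γ t)
  · exact ⟨b, ⟨htb, le_rfl⟩, by simp [hb]⟩
  obtain ⟨a₁, -, h₁, hK⟩ := ENNReal.lt_iff_exists_real_btwn.1 h
  obtain ⟨a₀, -, h₀, h₀₁⟩ := ENNReal.lt_iff_exists_real_btwn.1 h₁
  have ha₀ : 0 < a₀ := ENNReal.ofReal_pos.1 (pos_of_gt h₀)
  have ha₀₁ : a₀ < a₁ := (ENNReal.ofReal_lt_ofReal_iff'.1 h₀₁).1
  obtain ⟨s, hs, hball⟩ :=
    exists_radius_dist_le_of_plip_lt h₀ (dist_pos.2 hb.symm)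
  set r := a₀ / a₁ * s
  have hr : 0 < r := mul_pos (div_pos ha₀ (ha₀.trans ha₀₁)) hs.1
  have hrs : r < s := mul_lt_of_lt_one_left hs.1 ((div_lt_one (ha₀.trans ha₀₁)).2 ha₀₁)
  obtain ⟨t', ht', hdist⟩ : ∃ t' ∈ Icc t b, dist (γ t) (γ t') = r :=
    intermediate_value_Icc htb.le ((continuous_const.dist continuous_id).comp_continuousOn hγ)
      ⟨by simpa using hr.le, hrs.le.trans hs.2.le⟩
  have htt' : t ≠ t' := by rintro rfl; simp [hr.ne] at hdist
  refine ⟨t', ⟨ht'.1.lt_of_ne htt', ht'.2⟩, ?_⟩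
  have hf : dist (f (γ t)) (f (γ t')) ≤ a₁ * dist (γ t) (γ t') := by
    calc dist (f (γ t)) (f (γ t')) ≤ a₀ * s := hball _ (mem_ball'.2 (hdist.trans_lt hrs))
      _ = a₁ * dist (γ t) (γ t') := by
        rw [hdist, ← mul_assoc, mul_div_cancel₀ a₀ (ha₀.trans ha₀₁).ne']
  calc edist (f (γ t)) (f (γ t')) ≤ ENNReal.ofReal a₁ * edist (γ t) (γ t') := by
        rw [edist_dist, edist_dist, ← ENNReal.ofReal_mul (ha₀.trans ha₀₁).le]
        exact ENNReal.ofReal_le_ofReal hf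
    _ ≤ K * edist (γ t) (γ t') := by gcongr

theorem edist_le_mul_eVariationOn_of_plip_lt {K : ℝ≥0∞} (hf : ∀ x, plip f x < K) {γ : ℝ → X}
    {a b : ℝ} (hab : a ≤ b) (hγ : ContinuousOn γ (Icc a b)) :
    edist (f (γ a)) (f (γ b)) ≤ K * eVariationOn γ (Icc a b) := by
  have hfc : Continuous f :=
    continuous_iff_continuousAt.2 fun x => continuousAt_of_plip_lt_top ((hf x).trans_le le_top)
  refine le_of_forall_exists_gt_le (R := fun t => K * eVariationOn γ (Icc a t)) hab
    ((continuous_const.edist hfc).comp_continuousOn hγ)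
    (fun t _ u _ htu => mul_le_mul_right (eVariationOn.mono γ (Icc_subset_Icc_right htu)) K)
    (by simp) fun t ht hψt => ?_
  obtain ⟨t', ht', hstep⟩ :=
    exists_edist_le_of_plip_lt (hf _) ht.2 (hγ.mono (Icc_subset_Icc_left ht.1))
  refine ⟨t', ht', ?_⟩
  have hvar :
      eVariationOn γ (Icc a t) + eVariationOn γ (Icc t t') = eVariationOn γ (Icc a t') := by
    simpa only [univ_inter] using eVariationOn.Icc_add_Icc γ ht.1 ht'.1.le (mem_univ t)
  calc edist (f (γ a)) (f (γ t')) ≤ edist (f (γ a)) (f (γ t)) + edist (f (γ t)) (f (γ t')) :=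
        edist_triangle _ _ _
    _ ≤ K * eVariationOn γ (Icc a t) + K * eVariationOn γ (Icc t t') := by
        exact add_le_add hψt (hstep.trans (mul_le_mul_right
          (eVariationOn.edist_le γ (s := Icc t t') ⟨le_rfl, ht'.1.le⟩ ⟨ht'.1.le, le_rfl⟩) K))
    _ = K * eVariationOn γ (Icc a t') := by rw [← mul_add, hvar]

theorem edist_le_mul_eVariationOn_of_plip_le {K : ℝ≥0} (hf : ∀ x, plip f x ≤ K) {γ : ℝ → X}
    {a b : ℝ} (hab : a ≤ b) (hγ : ContinuousOn γ (Icc a b))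
    (hV : eVariationOn γ (Icc a b) ≠ ⊤) :
    edist (f (γ a)) (f (γ b)) ≤ K * eVariationOn γ (Icc a b) := by
  refine ge_of_tendsto (x := 𝓝[>] K) (ENNReal.Tendsto.mul_const
    ((ENNReal.continuous_coe.tendsto K).mono_left nhdsWithin_le_nhds) (Or.inr hV))
    (eventually_nhdsWithin_of_forall fun K' hK' => ?_)
  exact edist_le_mul_eVariationOn_of_plip_lt
    (fun x => (hf x).trans_lt (ENNReal.coe_lt_coe.2 hK')) hab hγ

end CurveEstimate

theorem stmt_1_general {X Y : Type*} [MetricSpace X] [MetricSpace Y] (C lam : ℝ) (hC : 0 ≤ C)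
    (f : X → Y) (hf : ∀ x : X, plip f x ≤ ENNReal.ofReal C)
    (hqc : QuasiconvexSet (Set.univ : Set X) lam) :
    LipschitzWith (Real.toNNReal (C * lam)) f := by
  intro x y
  obtain ⟨γ, hγ, -, rfl, rfl, hγV⟩ := hqc x (mem_univ x) y (mem_univ y)
  calc edist (f (γ 0)) (f (γ 1)) ≤ ENNReal.ofReal C * eVariationOn γ (Icc 0 1) :=
        edist_le_mul_eVariationOn_of_plip_le hf zero_le_one hγ
          (ne_top_of_le_ne_top ENNReal.ofReal_ne_top hγV)
    _ ≤ ENNReal.ofReal C * ENNReal.ofReal (lam * dist (γ 0) (γ 1)) := by gcongr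
    _ = ENNReal.ofReal (C * lam) * edist (γ 0) (γ 1) := by
        rw [ENNReal.ofReal_mul' dist_nonneg, ← mul_assoc, ← ENNReal.ofReal_mul hC, edist_dist]

/-- If `lip f (x) ≤ C` for all `x` and `X` is `λ`-quasiconvex, then `f` is
`(C·λ)`-Lipschitz. -/
theorem stmt_1 {X Y : Type*} [MetricSpace X] [MetricSpace Y] (C lam : ℝ) (hC : 0 ≤ C)
    (hlam : 1 ≤ lam) (f : X → Y) (hf : ∀ x : X, plip f x ≤ ENNReal.ofReal C)
    (hqc : QuasiconvexSet (Set.univ : Set X) lam) :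
    LipschitzWith (Real.toNNReal (C * lam)) f :=
  stmt_1_general C lam hC f hf hqc
end

section
/- Let I be a nonempty index set, let Σ be a finite-dimensional subcomplex of Σ(I) equipped with the ℓ₂-metric, and let A ⊂ |Σ| be a nonempty separable subset. Then the subcomplex Hull(A) has at most countably many vertices; more precisely, for every countable dense subset Z ⊂ A, the underlying set of Hull(A) equals the union over z ∈ Z of the faces σ(z). -/
open Set Metric Filter MeasureTheory
open scoped ENNReal NNReal

/-!
A point of `|Σ|` lies in the relative interior of the face spanned by its support, so the faces
of `Hull(A)` are exactly the nonempty subsets of supports of points of `A`. Since every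
coordinate is continuous on `ℓ₂(I)`, a finite support can only grow under small perturbations;
hence every point of `A` has its support inside the support of some point of a dense set
`Z ⊆ A`. So the vertices of `Hull(A)` lie in the union of the finite supports of the points
of `Z`, and every face of `Hull(A)` is a face of some `σ(z)`, `z ∈ Z`.
-/

section

open Function Topology

section Lp

variable {α E : Type*} [NormedAddCommGroup E] [NormedSpace ℝ E] {p : ℝ≥0∞} [Fact (1 ≤ p)]

lemma lp.eventually_support_subset {x : lp (fun _ : α => E) p} (hx : (support x).Finite) :
    ∀ᶠ y : lp (fun _ : α => E) p in 𝓝 x, support x ⊆ support y := by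
  have hopen : ∀ i, IsOpen {y : lp (fun _ : α => E) p | y i ≠ 0} := fun i =>
    isOpen_ne_fun (lp.evalCLM ℝ (fun _ : α => E) p i).continuous continuous_const
  exact (Filter.eventually_all_finite hx).2 fun i hi => (hopen i).mem_nhds hi

lemma lp.exists_mem_support_superset {x : lp (fun _ : α => E) p}
    {Z : Set (lp (fun _ : α => E) p)} (hx : (support x).Finite) (hxZ : x ∈ closure Z) :
    ∃ z ∈ Z, support x ⊆ support z :=
  ((mem_closure_iff_frequently.1 hxZ).and_eventually (lp.eventually_support_subset hx)).exists

end Lp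

variable {I : Type*}

lemma stdVec_apply [DecidableEq I] (i j : I) : stdVec i j = if j = i then (1 : ℝ) else 0 := by
  simp only [stdVec, lp.single_apply]
  split_ifs with h <;> simp [h]

lemma sum_smul_stdVec {s : Finset I} {x : L2 I} (hx : support x ⊆ s) :
    ∑ i ∈ s, x i • stdVec i = x := by
  classical
  ext j
  simp only [lp.coeFn_sum, Finset.sum_apply, lp.coeFn_smul, Pi.smul_apply, stdVec_apply,
    smul_eq_mul, mul_ite, mul_one, mul_zero, Finset.sum_ite_eq]
  split_ifs with hj
  · rfl
  · exact (notMem_support.1 fun h => hj (hx h)).symm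

lemma mem_faceSet_iff {s : Finset I} {x : L2 I} :
    x ∈ faceSet s ↔ (∀ i, 0 ≤ x i) ∧ support x ⊆ s ∧ ∑ i ∈ s, x i = 1 := by
  classical
  constructor
  · refine fun hx => convexHull_min
      (t := {y : L2 I | (∀ i, 0 ≤ y i) ∧ support y ⊆ s ∧ ∑ i ∈ s, y i = 1}) ?_ ?_ hx
    · rintro _ ⟨i, hi, rfl⟩
      refine ⟨fun j => ?_, fun j hj => ?_, ?_⟩
      · rw [stdVec_apply]; split_ifs <;> norm_num
      · by_contra hjs
        exact hj (by rw [stdVec_apply, if_neg (by rintro rfl; exact hjs hi)])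
      · simp only [stdVec_apply, Finset.sum_ite_eq', Finset.mem_coe.1 hi, if_true]
    · rintro y ⟨hy0, hys, hy1⟩ z ⟨hz0, hzs, hz1⟩ a b ha hb hab
      have hcoord : ∀ j, (a • y + b • z) j = a * y j + b * z j := fun j => rfl
      refine ⟨fun j => ?_, fun j hj => ?_, ?_⟩
      · rw [hcoord]; have := hy0 j; have := hz0 j; positivity
      · by_contra hjs
        rw [mem_support, hcoord, notMem_support.1 fun h => hjs (hys h),
          notMem_support.1 fun h => hjs (hzs h)] at hj
        simp at hj
      · simp only [hcoord, Finset.sum_add_distrib, ← Finset.mul_sum, hy1, hz1, mul_one, hab]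
  · rintro ⟨h0, hs, h1⟩
    rw [← sum_smul_stdVec hs, ← Finset.centerMass_eq_of_sum_1 _ _ h1]
    exact Finset.centerMass_mem_convexHull s (fun i _ => h0 i) (by rw [h1]; norm_num)
      (fun i hi => ⟨i, hi, rfl⟩)

lemma faceSet_mono {s t : Finset I} (h : s ⊆ t) : faceSet s ⊆ faceSet t :=
  convexHull_mono (Set.image_mono (by exact_mod_cast h))

lemma nonempty_of_mem_faceSet {s : Finset I} {x : L2 I} (hx : x ∈ faceSet s) :
    s.Nonempty := by
  rw [Finset.nonempty_iff_ne_empty]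
  rintro rfl
  simpa using (mem_faceSet_iff.1 hx).2.2

lemma memRelInt_iff {t : Finset I} {x : L2 I} :
    memRelInt t x ↔ x ∈ faceSet t ∧ (t : Set I) = support x := by
  refine ⟨fun ⟨hx, hpos⟩ => ⟨hx, ?_⟩, fun ⟨hx, ht⟩ => ⟨hx, fun i hi => ?_⟩⟩
  · exact subset_antisymm (fun i hi => (hpos i hi).ne') (mem_faceSet_iff.1 hx).2.1
  · have hi' : i ∈ support x := ht ▸ Finset.mem_coe.2 hi
    exact ((mem_faceSet_iff.1 hx).1 i).lt_of_ne' hi'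

lemma exists_memRelInt_subset {s : Finset I} {x : L2 I} (hx : x ∈ faceSet s) :
    ∃ t ⊆ s, memRelInt t x := by
  classical
  obtain ⟨h0, hs, h1⟩ := mem_faceSet_iff.1 hx
  have ht : ((s.filter fun i => x i ≠ 0 : Finset I) : Set I) = support x := by
    rw [Finset.coe_filter]
    exact Set.sep_eq_of_subset hs
  refine ⟨_, Finset.filter_subset _ _, memRelInt_iff.2 ⟨?_, ht⟩⟩
  exact mem_faceSet_iff.2 ⟨h0, ht.symm.subset, by rw [Finset.sum_filter_ne_zero, h1]⟩

lemma subset_of_memRelInt {t u : Finset I} {x : L2 I} (hu : memRelInt u x)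
    (ht : (t : Set I) ⊆ support x) : t ⊆ u :=
  Finset.coe_subset.1 (ht.trans (memRelInt_iff.1 hu).2.ge)

lemma IsSubcomplex.exists_memRelInt {F : Set (Finset I)} (hF : IsSubcomplex F) {x : L2 I}
    (hx : x ∈ cpxCarrier F) : ∃ t ∈ F, memRelInt t x := by
  obtain ⟨s, hsF, hxs⟩ := Set.mem_iUnion₂.1 hx
  obtain ⟨t, hts, ht⟩ := exists_memRelInt_subset hxs
  exact ⟨t, hF.down_closed s hsF t (nonempty_of_mem_faceSet ht.1) hts, ht⟩

lemma finite_support_of_mem_cpxCarrier {F : Set (Finset I)} {x : L2 I}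
    (hx : x ∈ cpxCarrier F) : (support x).Finite := by
  obtain ⟨s, -, hxs⟩ := Set.mem_iUnion₂.1 hx
  exact s.finite_toSet.subset (mem_faceSet_iff.1 hxs).2.1

section Hull

variable {F : Set (Finset I)} {A : Set (L2 I)}

lemma hullFaces_eq (hF : IsSubcomplex F) (hA : A.Nonempty) (hAsub : A ⊆ cpxCarrier F) :
    hullFaces F A = {t : Finset I | t.Nonempty ∧ ∃ x ∈ A, (t : Set I) ⊆ support x} := by
  set G₀ := {t : Finset I | t.Nonempty ∧ ∃ x ∈ A, (t : Set I) ⊆ support x}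
  have hmem : ∀ x ∈ A, ∃ u ∈ F, memRelInt u x ∧ u ∈ G₀ := fun x hx => by
    obtain ⟨u, huF, hu⟩ := hF.exists_memRelInt (hAsub hx)
    exact ⟨u, huF, hu, nonempty_of_mem_faceSet hu.1, x, hx, (memRelInt_iff.1 hu).2.le⟩
  have hG₀F : G₀ ⊆ F := by
    rintro t ⟨htne, x, hx, htx⟩
    obtain ⟨u, huF, hu, -⟩ := hmem x hx
    exact hF.down_closed u huF t htne (subset_of_memRelInt hu htx)
  have hG₀ : IsSubcomplex G₀ :=
    { nonempty := let ⟨x, hx⟩ := hA; let ⟨u, _, _, hu⟩ := hmem x hx; ⟨u, hu⟩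
      faces_nonempty := fun t ht => ht.1
      down_closed := fun t ⟨_, x, hx, htx⟩ t' ht' ht't =>
        ⟨ht', x, hx, (Finset.coe_subset.2 ht't).trans htx⟩ }
  have hAG₀ : A ⊆ cpxCarrier G₀ := fun x hx =>
    let ⟨u, _, hu, huG₀⟩ := hmem x hx; Set.mem_biUnion huG₀ hu.1
  refine subset_antisymm (Set.sInter_subset_of_mem ⟨hG₀F, hG₀, hAG₀⟩) (Set.subset_sInter ?_)
  rintro G ⟨-, hG, hAG⟩ t ⟨htne, x, hx, htx⟩
  obtain ⟨u, huG, hu⟩ := hG.exists_memRelInt (hAG hx)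
  exact hG.down_closed u huG t htne (subset_of_memRelInt hu htx)

lemma exists_support_superset_of_mem_hullFaces (hF : IsSubcomplex F) (hA : A.Nonempty)
    (hAsub : A ⊆ cpxCarrier F) {Z : Set (L2 I)} (hAZ : A ⊆ closure Z) {t : Finset I}
    (ht : t ∈ hullFaces F A) :
    ∃ z ∈ Z, (t : Set I) ⊆ support z := by
  rw [hullFaces_eq hF hA hAsub] at ht
  obtain ⟨-, x, hx, htx⟩ := ht
  obtain ⟨z, hz, hxz⟩ :=
    lp.exists_mem_support_superset (finite_support_of_mem_cpxCarrier (hAsub hx)) (hAZ hx)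
  exact ⟨z, hz, htx.trans hxz⟩

lemma countable_vertices_hullFaces (hF : IsSubcomplex F) (hA : A.Nonempty)
    (hAsub : A ⊆ cpxCarrier F) (hsep : TopologicalSpace.IsSeparable A) :
    {i : I | ∃ s ∈ hullFaces F A, i ∈ s}.Countable := by
  obtain ⟨Z, hZA, hZ, hAZ⟩ := hsep.exists_countable_dense_subset
  refine (hZ.biUnion fun z hz =>
    (finite_support_of_mem_cpxCarrier (hAsub (hZA hz))).countable).mono ?_
  rintro i ⟨t, ht, hit⟩
  obtain ⟨z, hz, htz⟩ := exists_support_superset_of_mem_hullFaces hF hA hAsub hAZ ht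
  exact Set.mem_biUnion hz (htz hit)

lemma cpxCarrier_hullFaces_eq (hF : IsSubcomplex F) (hA : A.Nonempty)
    (hAsub : A ⊆ cpxCarrier F) {Z : Set (L2 I)} (hZA : Z ⊆ A) (hAZ : A ⊆ closure Z) :
    cpxCarrier (hullFaces F A) = ⋃ z ∈ Z, ⋃ s ∈ F, ⋃ (_ : memRelInt s z), faceSet s := by
  ext y
  simp only [cpxCarrier, Set.mem_iUnion, exists_prop]
  constructor
  · rintro ⟨t, ht, hyt⟩
    obtain ⟨z, hz, htz⟩ := exists_support_superset_of_mem_hullFaces hF hA hAsub hAZ ht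
    obtain ⟨u, huF, hu⟩ := hF.exists_memRelInt (hAsub (hZA hz))
    exact ⟨z, hz, u, huF, hu, faceSet_mono (subset_of_memRelInt hu htz) hyt⟩
  · rintro ⟨z, hz, s, hsF, hs, hys⟩
    rw [hullFaces_eq hF hA hAsub]
    exact ⟨s, ⟨hF.faces_nonempty s hsF, z, hZA hz, (memRelInt_iff.1 hs).2.le⟩, hys⟩

end Hull

end

theorem stmt_3_general {I : Type*} (F : Set (Finset I)) (hF : IsSubcomplex F)
    (A : Set (L2 I)) (hA : A.Nonempty) (hAsub : A ⊆ cpxCarrier F)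
    (hsep : TopologicalSpace.IsSeparable A) :
    {i : I | ∃ s ∈ hullFaces F A, i ∈ s}.Countable ∧
      ∀ Z : Set (L2 I), Z ⊆ A → Z.Countable → A ⊆ closure Z →
        cpxCarrier (hullFaces F A) =
          ⋃ z ∈ Z, ⋃ s ∈ F, ⋃ (_ : memRelInt s z), faceSet s :=
  ⟨countable_vertices_hullFaces hF hA hAsub hsep,
    fun _ hZA _ hAZ => cpxCarrier_hullFaces_eq hF hA hAsub hZA hAZ⟩

/-- If `A ⊆ |Σ|` is nonempty and separable, then `Hull(A)` has at most
countably many vertices; more precisely, for every countable dense subset `Z ⊆ A` the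
underlying set of `Hull(A)` is the union over `z ∈ Z` of the faces `σ(z)`. -/
theorem stmt_3 {I : Type*} [Nonempty I] (n : ℕ) (F : Set (Finset I)) (hF : IsSubcomplex F)
    (hdim : ∀ s ∈ F, s.card ≤ n + 1)
    (A : Set (L2 I)) (hA : A.Nonempty) (hAsub : A ⊆ cpxCarrier F)
    (hsep : TopologicalSpace.IsSeparable A) :
    {i : I | ∃ s ∈ hullFaces F A, i ∈ s}.Countable ∧
      ∀ Z : Set (L2 I), Z ⊆ A → Z.Countable → A ⊆ closure Z →
        cpxCarrier (hullFaces F A) =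
          ⋃ z ∈ Z, ⋃ s ∈ F, ⋃ (_ : memRelInt s z), faceSet s :=
  stmt_3_general F hF A hA hAsub hsep
end

section
/- For every integer m ≥ 1 there exists a constant K > 0 depending only on m with the following property: for every b ∈ Δ^m with |b − o| < r_m/2 and every r > 0, the radial projection ρ_b : Δ^m ∖ {b} → ∂Δ^m is (K/r)-Lipschitz on Δ^m ∖ U(b, r), where U(b, r) denotes the open Euclidean ball of radius r around b. -/
/-!
The incenter `o` is at least as deep in `Δ^m` as the barycenter, i.e. at depth `≥ 1/(m+1)`, so
`b` has depth `> 1/(2(m+1))`; moving the mass `b j` to another vertex reaches `∂Δ^m` within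
distance `2 b j`, hence every coordinate of `b` is at least `β = 1/(4(m+1))`.

Write `ρ x = b + s (x - b)` and `ρ y = b + t (y - b)` with `s ≤ t`, and compare with
`q' = b + s (y - b)`, the point of the segment `[b, ρ y]` at parameter `s / t`. Then
`|ρ x - q'| = s |x - y|`, and `s ≤ 2 / r` because `s |x - b| = |ρ x - b| ≤ 2`. On the other
hand `ρ x` has a vanishing coordinate `j`, where `q' j ≥ (1 - s/t) β`; so
`|q' - ρ y| = (1 - s/t) |b - ρ y| ≤ 2 (1 - s/t) ≤ (2/β) |ρ x - q'|`, and
`|ρ x - ρ y| ≤ (1 + 2/β) (2/r) |x - y|`.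
-/

open Set Metric Filter MeasureTheory
open scoped ENNReal NNReal

/-- The standard Euclidean `m`-simplex `Δ^m ⊆ ℝ^{m+1}`. -/
def euSimplex (m : ℕ) : Set (EuclideanSpace ℝ (Fin (m + 1))) :=
  {x | (∀ i, 0 ≤ x i) ∧ ∑ i, x i = 1}

/-- The relative boundary `∂Δ^m` of the standard Euclidean `m`-simplex
(the union of its proper faces). -/
def euSimplexBdry (m : ℕ) : Set (EuclideanSpace ℝ (Fin (m + 1))) :=
  {x ∈ euSimplex m | ∃ i, x i = 0}

lemma abs_apply_sub_le_dist {ι : Type*} [Fintype ι] (x y : EuclideanSpace ℝ ι) (i : ι) :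
    |x i - y i| ≤ dist x y := by
  simpa only [Real.dist_eq] using PiLp.dist_apply_le x y i

section Simplex

variable {m : ℕ}

lemma norm_le_one_of_mem_euSimplex {z : EuclideanSpace ℝ (Fin (m + 1))}
    (hz : z ∈ euSimplex m) : ‖z‖ ≤ 1 := by
  have hsq : ∀ i, ‖z i‖ ^ 2 ≤ z i := fun i => by
    have hle : z i ≤ 1 := hz.2 ▸ Finset.single_le_sum (fun j _ => hz.1 j) (Finset.mem_univ i)
    rw [Real.norm_eq_abs, sq_abs]
    nlinarith [hz.1 i]
  calc ‖z‖ = √(∑ i, ‖z i‖ ^ 2) := EuclideanSpace.norm_eq z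
    _ ≤ √(∑ i, z i) := Real.sqrt_le_sqrt (Finset.sum_le_sum fun i _ => hsq i)
    _ = 1 := by rw [hz.2, Real.sqrt_one]

lemma dist_le_two_of_mem_euSimplex {x y : EuclideanSpace ℝ (Fin (m + 1))}
    (hx : x ∈ euSimplex m) (hy : y ∈ euSimplex m) : dist x y ≤ 2 := by
  rw [dist_eq_norm]
  linarith [norm_sub_le x y, norm_le_one_of_mem_euSimplex hx, norm_le_one_of_mem_euSimplex hy]

noncomputable def euSimplexCenter (m : ℕ) : EuclideanSpace ℝ (Fin (m + 1)) :=
  WithLp.toLp 2 fun _ => ((m : ℝ) + 1)⁻¹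

lemma euSimplexCenter_mem : euSimplexCenter m ∈ euSimplex m := by
  refine ⟨fun i => by simp only [euSimplexCenter]; positivity, ?_⟩
  simp only [euSimplexCenter, Finset.sum_const, Finset.card_univ, Fintype.card_fin, nsmul_eq_mul,
    Nat.cast_add, Nat.cast_one]
  field_simp

lemma inv_le_infDist_euSimplexCenter (hne : (euSimplexBdry m).Nonempty) :
    ((m : ℝ) + 1)⁻¹ ≤ infDist (euSimplexCenter m) (euSimplexBdry m) := by
  refine (le_infDist hne).2 fun z ⟨_, i, hi⟩ => ?_
  have hc : euSimplexCenter m i = ((m : ℝ) + 1)⁻¹ := rfl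
  simpa [hi, hc, abs_of_pos (by positivity : (0 : ℝ) < ((m : ℝ) + 1)⁻¹)] using
    abs_apply_sub_le_dist (euSimplexCenter m) z i

/-- Moving the mass `z j` from vertex `j` to another vertex `k` lands on the boundary. -/
lemma infDist_euSimplexBdry_le_two_mul_apply {z : EuclideanSpace ℝ (Fin (m + 1))}
    (hz : z ∈ euSimplex m) {j k : Fin (m + 1)} (hjk : j ≠ k) :
    infDist z (euSimplexBdry m) ≤ 2 * z j := by
  set v : EuclideanSpace ℝ (Fin (m + 1)) :=
    EuclideanSpace.single k 1 - EuclideanSpace.single j 1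
  have hv : ∀ i, v i = (if i = k then 1 else 0) - (if i = j then 1 else 0) := fun i => by
    simp [v]
  have hmem : z + z j • v ∈ euSimplexBdry m := by
    refine ⟨⟨fun i => ?_, ?_⟩, j, ?_⟩
    · have := hz.1 i
      have := hz.1 j
      simp only [PiLp.add_apply, PiLp.smul_apply, smul_eq_mul, hv]
      split_ifs <;> subst_vars <;> linarith
    · simp [hv, Finset.sum_add_distrib, ← Finset.mul_sum, Finset.sum_sub_distrib, hz.2]
    · simp [hv, hjk]
  have hnorm : ‖v‖ ≤ 2 := by
    calc ‖v‖ ≤ ‖EuclideanSpace.single k (1 : ℝ)‖ + ‖EuclideanSpace.single j (1 : ℝ)‖ :=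
          norm_sub_le _ _
      _ = 2 := by norm_num
  calc infDist z (euSimplexBdry m) ≤ dist z (z + z j • v) := infDist_le_dist_of_mem hmem
    _ = z j * ‖v‖ := by
      rw [dist_eq_norm, sub_add_cancel_left, norm_neg, norm_smul, Real.norm_of_nonneg (hz.1 j)]
    _ ≤ 2 * z j := by nlinarith [hz.1 j]

lemma inv_four_mul_le_apply_of_dist_lt (hm : 1 ≤ m) {o b : EuclideanSpace ℝ (Fin (m + 1))}
    (hmax : ∀ x ∈ euSimplex m,
      infDist x (euSimplexBdry m) ≤ infDist o (euSimplexBdry m))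
    (hb : b ∈ euSimplex m) (hbo : dist b o < infDist o (euSimplexBdry m) / 2)
    (j : Fin (m + 1)) : (4 * ((m : ℝ) + 1))⁻¹ ≤ b j := by
  have hne : (euSimplexBdry m).Nonempty := by
    rw [nonempty_iff_ne_empty]
    rintro h
    rw [h, infDist_empty] at hbo
    linarith [dist_nonneg (x := b) (y := o)]
  have hdeep := (inv_le_infDist_euSimplexCenter hne).trans (hmax _ euSimplexCenter_mem)
  have : Nontrivial (Fin (m + 1)) := Fin.nontrivial_iff_two_le.2 (by omega)
  obtain ⟨k, hjk⟩ := exists_ne j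
  have hbj := infDist_euSimplexBdry_le_two_mul_apply hb hjk.symm
  have hob : infDist o (euSimplexBdry m) ≤ infDist b (euSimplexBdry m) + dist o b :=
    infDist_le_infDist_add_dist
  rw [dist_comm] at hob
  rw [mul_inv]
  linarith

end Simplex

section Radial

variable {m : ℕ} {b x y p q : EuclideanSpace ℝ (Fin (m + 1))} {β : ℝ}

lemma mul_dist_le_of_radial (hb : b ∈ euSimplex m) (hβ : 0 ≤ β) (hbβ : ∀ j, β ≤ b j)
    (hp : p ∈ euSimplexBdry m) (hq : q ∈ euSimplex m) {s t : ℝ} (hs : 0 ≤ s) (hst : s ≤ t)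
    (hpx : p = b + s • (x - b)) (hqy : q = b + t • (y - b)) :
    β * dist p q ≤ (β + 2) * (s * dist x y) := by
  set q' := b + s • (y - b)
  obtain ⟨j, hpj⟩ := hp.2
  have hpq' : dist p q' = s * dist x y := by
    rw [hpx, dist_add_left, dist_smul₀, Real.norm_of_nonneg hs, dist_sub_right]
  have hq'q : dist q' q = (t - s) * dist y b := by
    rw [hqy, dist_add_left, dist_eq_norm, ← sub_smul, norm_smul,
      Real.norm_of_nonpos (by linarith), dist_eq_norm]
    ring
  have hqb : t * dist y b ≤ 2 := calc
    t * dist y b = dist q b := by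
      rw [hqy, dist_self_add_left, norm_smul, Real.norm_of_nonneg (hs.trans hst), dist_eq_norm]
    _ ≤ 2 := dist_le_two_of_mem_euSimplex hq hb
  have hq'j : t * q' j = (t - s) * b j + s * q j := by
    simp only [q', hqy, PiLp.add_apply, PiLp.smul_apply, PiLp.sub_apply, smul_eq_mul]
    ring
  have hdepth : (t - s) * β ≤ t * dist p q' := by
    have hcoord := abs_apply_sub_le_dist q' p j
    rw [hpj, sub_zero, dist_comm] at hcoord
    nlinarith [hbβ j, hq.1 j, le_abs_self (q' j)]
  have hq'q_le : β * dist q' q ≤ 2 * dist p q' := by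
    calc β * dist q' q = ((t - s) * β) * dist y b := by rw [hq'q]; ring
      _ ≤ (t * dist p q') * dist y b := by gcongr
      _ = dist p q' * (t * dist y b) := by ring
      _ ≤ dist p q' * 2 := by gcongr
      _ = 2 * dist p q' := by ring
  calc β * dist p q ≤ β * (dist p q' + dist q' q) := by gcongr; exact dist_triangle _ _ _
    _ ≤ (β + 2) * dist p q' := by linarith
    _ = (β + 2) * (s * dist x y) := by rw [hpq']

lemma dist_le_of_radial (hb : b ∈ euSimplex m) (hβ : 0 < β) (hbβ : ∀ j, β ≤ b j)
    {r : ℝ} (hr : 0 < r) (hxr : r ≤ dist x b) (hyr : r ≤ dist y b)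
    (hp : p ∈ euSimplexBdry m) (hq : q ∈ euSimplexBdry m)
    (hpx : ∃ s : ℝ, 0 ≤ s ∧ p = b + s • (x - b)) (hqy : ∃ t : ℝ, 0 ≤ t ∧ q = b + t • (y - b)) :
    dist p q ≤ 2 * (1 + 2 / β) / r * dist x y := by
  obtain ⟨s, hs, hpx⟩ := hpx
  obtain ⟨t, ht, hqy⟩ := hqy
  wlog hst : s ≤ t generalizing x y p q s t
  · rw [dist_comm p, dist_comm x]
    exact this hyr hxr hq hp t ht hqy s hs hpx (le_of_not_ge hst)
  have hsr : s ≤ 2 / r := by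
    rw [le_div_iff₀ hr]
    calc s * r ≤ s * dist x b := by gcongr
      _ = dist p b := by
        rw [hpx, dist_self_add_left, norm_smul, Real.norm_of_nonneg hs, dist_eq_norm]
      _ ≤ 2 := dist_le_two_of_mem_euSimplex hp.1 hb
  have hpq := mul_dist_le_of_radial hb hβ.le hbβ hp hq.1 hs hst hpx hqy
  calc dist p q ≤ (1 + 2 / β) * (s * dist x y) := by
        rw [one_add_div hβ.ne', div_mul_eq_mul_div, le_div_iff₀ hβ]
        linarith
    _ ≤ (1 + 2 / β) * (2 / r * dist x y) := by gcongr
    _ = 2 * (1 + 2 / β) / r * dist x y := by ring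

end Radial

/-- There is `K = K(m) > 0` such that for every `b ∈ Δ^m` with
`|b − o| < r_m/2` (where `o` is the incenter, i.e. the point of `Δ^m` maximizing the distance
to `∂Δ^m`, and `r_m = d(o, ∂Δ^m)` is the inradius) and every `r > 0`, the radial projection
`ρ_b : Δ^m ∖ {b} → ∂Δ^m` with center `b` is `(K/r)`-Lipschitz on `Δ^m ∖ U(b,r)`. -/
theorem stmt_13 (m : ℕ) (hm : 1 ≤ m) :
    ∃ K : ℝ, 0 < K ∧
      ∀ o : EuclideanSpace ℝ (Fin (m + 1)), o ∈ euSimplex m →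
        -- `o` is the incenter: it maximizes the distance to the boundary over `Δ^m`
        (∀ x ∈ euSimplex m,
          Metric.infDist x (euSimplexBdry m) ≤ Metric.infDist o (euSimplexBdry m)) →
        ∀ b ∈ euSimplex m, dist b o < Metric.infDist o (euSimplexBdry m) / 2 →
          ∀ ρ : EuclideanSpace ℝ (Fin (m + 1)) → EuclideanSpace ℝ (Fin (m + 1)),
            -- `ρ` is the radial projection with center `b`: it maps `Δ^m ∖ {b}` to the unique
            -- point where the ray from `b` through `x` meets `∂Δ^m`
            (∀ x ∈ euSimplex m \ {b},
              ρ x ∈ euSimplexBdry m ∧ ∃ t : ℝ, 0 ≤ t ∧ ρ x = b + t • (x - b)) →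
            ∀ r : ℝ, 0 < r →
              ∀ x ∈ euSimplex m \ Metric.ball b r, ∀ y ∈ euSimplex m \ Metric.ball b r,
                dist (ρ x) (ρ y) ≤ (K / r) * dist x y := by
  set β : ℝ := (4 * ((m : ℝ) + 1))⁻¹
  refine ⟨2 * (1 + 2 / β), by positivity, ?_⟩
  intro o _ hmax b hb hbo ρ hρ r hr x hx y hy
  have hxr : r ≤ dist x b := not_lt.1 hx.2
  have hyr : r ≤ dist y b := not_lt.1 hy.2
  obtain ⟨hpx, hsx⟩ := hρ x ⟨hx.1, dist_pos.1 (hr.trans_le hxr)⟩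
  obtain ⟨hqy, hty⟩ := hρ y ⟨hy.1, dist_pos.1 (hr.trans_le hyr)⟩
  have hbβ := inv_four_mul_le_apply_of_dist_lt hm hmax hb hbo
  exact dist_le_of_radial hb (by positivity) hbβ hr hxr hyr hpx hqy hsx hty
end
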